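/- arXiv:1503.01996 — 2 statements merged into one kernel-verified Lean document; each statement's English description precedes it below -/
import Mathlib

section
/- Let c, m be positive integers, Z a real m×c matrix, and L a real c×c matrix with zero column sums (∀ j, ∑ i, L i j = 0) and nonpositive off-diagonal entries (L i j ≤ 0 for i ≠ j). Suppose x* : Fin m → ℝ is positive and satisfies L *ᵥ (fun i => Real.exp ((Zᵀ *ᵥ (fun k => Real.log (x* k))) i)) = 0. Then for every positive x : Fin m → ℝ, one has Z *ᵥ (L *ᵥ (fun i => Real.exp ((Zᵀ *ᵥ (fun k => Real.log (x k))) i))) = 0 if and only if for all distinct indices i, j with L i j ≠ 0, (Zᵀ *ᵥ (fun k => Real.log (x k) − Real.log (x* k))) i = (Zᵀ *ᵥ (fun k => Real.log (x k) − Real.log (x* k))) j. (The set of positive equilibria is exactly { x > 0 : Sᵀ Ln x = Sᵀ Ln x* }.) -/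
/-!
Write `K = exp (Zᵀ Ln x*)` and `u = Zᵀ Ln (x / x*)`, so that `exp (Zᵀ Ln x) = K ⊙ exp u`. Using
`L K = 0` and the zero column sums of `L`, the pairing `⟨u, L (K ⊙ exp u)⟩` equals
`∑ i j, -L i j * K j * D(u i, u j)`, where `D` is the Bregman divergence of `exp`. Off the
diagonal `-L i j ≥ 0`, so every term is nonnegative. If `Z L (K ⊙ exp u) = 0` the pairing
`⟨Ln (x / x*), Z L (K ⊙ exp u)⟩` vanishes, hence `u i = u j` across every edge. Conversely, if `u`
is constant across edges, `L (K ⊙ exp u) = exp u ⊙ L K = 0`.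
-/

open Matrix Real

noncomputable def expBregman (a b : ℝ) : ℝ :=
  exp a - exp b - exp b * (a - b)

lemma expBregman_eq_exp_mul (a b : ℝ) :
    expBregman a b = exp b * (exp (a - b) - (a - b + 1)) := by
  rw [expBregman, exp_sub]
  field_simp
  ring

lemma expBregman_nonneg (a b : ℝ) : 0 ≤ expBregman a b := by
  rw [expBregman_eq_exp_mul]
  exact mul_nonneg (exp_pos b).le (sub_nonneg.2 (add_one_le_exp _))

lemma expBregman_eq_zero_iff {a b : ℝ} : expBregman a b = 0 ↔ a = b := by
  refine ⟨fun h => ?_, fun h => by simp [expBregman, h]⟩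
  by_contra hab
  have := add_one_lt_exp (sub_ne_zero.2 hab)
  rw [expBregman_eq_exp_mul] at h
  nlinarith [exp_pos b]

section Laplacian

variable {ι : Type*} [Fintype ι] {L : Matrix ι ι ℝ} {K : ι → ℝ}

lemma dotProduct_mulVec_mul_exp (hcol : ∀ j, ∑ i, L i j = 0) (hK : L *ᵥ K = 0) (u : ι → ℝ) :
    u ⬝ᵥ (L *ᵥ fun j => K j * exp (u j)) =
      ∑ i, ∑ j, -L i j * K j * expBregman (u i) (u j) := by
  have hrow (i : ι) : ∑ j, L i j * K j = 0 := congrFun hK i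
  have hcol_mul (j : ι) (a : ℝ) : ∑ i, L i j * a = 0 := by rw [← Finset.sum_mul, hcol, zero_mul]
  have hexp : ∑ i, ∑ j, exp (u i) * (L i j * K j) = 0 := by
    simp only [← Finset.mul_sum, hrow, mul_zero, Finset.sum_const_zero]
  have hcol_term : ∑ i, ∑ j, L i j * (K j * exp (u j) * (1 - u j)) = 0 := by
    rw [Finset.sum_comm]
    simp only [hcol_mul, Finset.sum_const_zero]
  have hterm (i j : ι) : -L i j * K j * expBregman (u i) (u j) =
      u i * (L i j * (K j * exp (u j))) - exp (u i) * (L i j * K j) +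
        L i j * (K j * exp (u j) * (1 - u j)) := by
    rw [expBregman]
    ring
  simp only [hterm, Finset.sum_add_distrib, Finset.sum_sub_distrib, hexp, hcol_term, sub_zero,
    add_zero, dotProduct, mulVec, Finset.mul_sum]

lemma eq_of_dotProduct_mulVec_mul_exp_eq_zero (hcol : ∀ j, ∑ i, L i j = 0)
    (hoff : ∀ i j, i ≠ j → L i j ≤ 0) (hKpos : ∀ i, 0 < K i) (hK : L *ᵥ K = 0) {u : ι → ℝ}
    (h : u ⬝ᵥ (L *ᵥ fun j => K j * exp (u j)) = 0) {i j : ι} (hL : L i j ≠ 0) :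
    u i = u j := by
  have hterm_nonneg (i j : ι) : 0 ≤ -L i j * K j * expBregman (u i) (u j) := by
    rcases eq_or_ne i j with rfl | hij
    · simp [expBregman]
    · exact mul_nonneg (mul_nonneg (neg_nonneg.2 (hoff i j hij)) (hKpos j).le)
        (expBregman_nonneg _ _)
  rw [dotProduct_mulVec_mul_exp hcol hK, Finset.sum_eq_zero_iff_of_nonneg fun i _ =>
    Finset.sum_nonneg fun j _ => hterm_nonneg i j] at h
  have hterm_zero := (Finset.sum_eq_zero_iff_of_nonneg fun j _ => hterm_nonneg i j).1
    (h i (Finset.mem_univ _)) j (Finset.mem_univ _)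
  have hcoeff : -L i j * K j ≠ 0 := mul_ne_zero (neg_ne_zero.2 hL) (hKpos j).ne'
  exact expBregman_eq_zero_iff.1 ((mul_eq_zero.1 hterm_zero).resolve_left hcoeff)

end Laplacian

lemma mulVec_mul_eq_mul_mulVec {R ι : Type*} [CommSemiring R] [Fintype ι]
    {L : Matrix ι ι R} {f : ι → R} (hf : ∀ i j, i ≠ j → L i j ≠ 0 → f i = f j) (K : ι → R) :
    (L *ᵥ fun j => K j * f j) = fun i => f i * (L *ᵥ K) i := by
  funext i
  simp only [mulVec, dotProduct, Finset.mul_sum]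
  refine Finset.sum_congr rfl fun j _ => ?_
  rcases eq_or_ne i j with rfl | hij
  · ring
  rcases eq_or_ne (L i j) 0 with hL | hL
  · simp [hL]
  · rw [hf i j hij hL]
    ring

theorem equilibria_set_of_complex_balanced_network_general
    (c m : ℕ)
    (Z : Matrix (Fin m) (Fin c) ℝ)
    (L : Matrix (Fin c) (Fin c) ℝ)
    (hcol : ∀ j, ∑ i, L i j = 0)
    (hoff : ∀ i j, i ≠ j → L i j ≤ 0)
    (xs : Fin m → ℝ)
    (hbal : L *ᵥ (fun i => Real.exp ((Zᵀ *ᵥ (fun k => Real.log (xs k))) i)) = 0) :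
    ∀ x : Fin m → ℝ, (∀ k, 0 < x k) →
      (Z *ᵥ (L *ᵥ (fun i => Real.exp ((Zᵀ *ᵥ (fun k => Real.log (x k))) i))) = 0 ↔
        ∀ i j, i ≠ j → L i j ≠ 0 →
          (Zᵀ *ᵥ (fun k => Real.log (x k) - Real.log (xs k))) i =
            (Zᵀ *ᵥ (fun k => Real.log (x k) - Real.log (xs k))) j) := by
  intro x _
  set v : Fin m → ℝ := fun k => log (x k) - log (xs k)
  set K : Fin c → ℝ := fun i => exp ((Zᵀ *ᵥ fun k => log (xs k)) i)
  have hsplit : (fun i => exp ((Zᵀ *ᵥ fun k => log (x k)) i)) =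
      fun i => K i * exp ((Zᵀ *ᵥ v) i) := by
    funext i
    rw [← exp_add, show v = (fun k => log (x k)) - fun k => log (xs k) from rfl, mulVec_sub]
    simp
  rw [hsplit]
  constructor
  · intro h i j _ hL
    refine eq_of_dotProduct_mulVec_mul_exp_eq_zero hcol hoff (fun i => exp_pos _) hbal ?_ hL
    have hpairing := congrArg (v ⬝ᵥ ·) h
    rwa [dotProduct_zero, dotProduct_mulVec, ← mulVec_transpose] at hpairing
  · intro hpair
    rw [mulVec_mul_eq_mul_mulVec (f := fun i => exp ((Zᵀ *ᵥ v) i))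
      (fun i j hij hL => by rw [hpair i j hij hL]), hbal]
    simp only [Pi.zero_apply, mul_zero]
    exact mulVec_zero Z

theorem equilibria_set_of_complex_balanced_network
    (c m : ℕ) (hc : 0 < c) (hm : 0 < m)
    (Z : Matrix (Fin m) (Fin c) ℝ)
    (L : Matrix (Fin c) (Fin c) ℝ)
    (hcol : ∀ j, ∑ i, L i j = 0)
    (hoff : ∀ i j, i ≠ j → L i j ≤ 0)
    (xs : Fin m → ℝ) (hxs : ∀ k, 0 < xs k)
    (hbal : L *ᵥ (fun i => Real.exp ((Zᵀ *ᵥ (fun k => Real.log (xs k))) i)) = 0) :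
    ∀ x : Fin m → ℝ, (∀ k, 0 < x k) →
      (Z *ᵥ (L *ᵥ (fun i => Real.exp ((Zᵀ *ᵥ (fun k => Real.log (x k))) i))) = 0 ↔
        ∀ i j, i ≠ j → L i j ≠ 0 →
          (Zᵀ *ᵥ (fun k => Real.log (x k) - Real.log (xs k))) i =
            (Zᵀ *ᵥ (fun k => Real.log (x k) - Real.log (xs k))) j) :=
  equilibria_set_of_complex_balanced_network_general c m Z L hcol hoff xs hbal
end

section
/- Consider a reversible reaction graph on c vertices (finite edge set E, maps t, h : E → Fin c with t e ≠ h e, positive constants k⁺, k⁻ : E → ℝ, and Laplacian L as below) with no parallel edges (distinct edges have distinct underlying unordered vertex pairs). Let ρ : Fin c → ℝ be strictly positive with the kernel of v ↦ L *ᵥ v equal to the span of ρ. Then the following are equivalent: (1) L * Matrix.diagonal ρ is symmetric; (2) for every edge e, Real.log (k⁺ e / k⁻ e) = Real.log (ρ (h e)) − Real.log (ρ (t e)); (3) there exists x : Fin c → ℝ with Real.log (k⁺ e / k⁻ e) = x (h e) − x (t e) for every edge e (formal balancing). (Theorem 2 of the paper.) -/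
open Matrix

/-- The weighted Laplacian matrix of a reversible reaction graph on `c` vertices,
with edge set `E`, tail and head maps `t, h`, and forward and reverse reaction
constants `kp, km`. -/
def reactionLaplacian (c : ℕ) {E : Type*} [Fintype E]
    (t h : E → Fin c) (kp km : E → ℝ) : Matrix (Fin c) (Fin c) ℝ :=
  fun i j =>
    if i = j then
      (∑ e ∈ Finset.univ.filter (fun e => t e = j), kp e) +
        (∑ e ∈ Finset.univ.filter (fun e => h e = j), km e)
    else
      -((∑ e ∈ Finset.univ.filter (fun e => t e = j ∧ h e = i), kp e) +
        (∑ e ∈ Finset.univ.filter (fun e => t e = i ∧ h e = j), km e))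

/-!
Everything runs through detailed balance at a vector `σ`: `k⁺ e σ(t e) = k⁻ e σ(h e)` for
every edge. Without parallel edges or loops the entries of `L` at `(h e, t e)` and `(t e, h e)`
are `-k⁺ e` and `-k⁻ e`, so `L · diag σ` is symmetric exactly when `σ` is detailed balanced;
for positive `σ` this is condition (2) with `σ` in place of `ρ`. Conversely, if `x` formally
balances the graph then `exp ∘ x` is detailed balanced, and since the columns of `L` sum to zero,
`L (exp ∘ x) = (L · diag (exp ∘ x))ᵀ 𝟙 = 0`. Hence `exp ∘ x` is a multiple of `ρ`, and detailed
balance passes to `ρ`.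
-/

lemma log_div_eq_log_sub_log_iff {a b x y : ℝ} (ha : 0 < a) (hb : 0 < b) (hx : 0 < x)
    (hy : 0 < y) : Real.log (a / b) = Real.log y - Real.log x ↔ a * x = b * y := by
  rw [← Real.log_injOn_pos.eq_iff (mul_pos ha hx) (mul_pos hb hy), Real.log_div ha.ne' hb.ne',
    Real.log_mul ha.ne' hx.ne', Real.log_mul hb.ne' hy.ne']
  constructor <;> intro h <;> linarith

def IsDetailedBalanced {c : ℕ} {E : Type*} (t h : E → Fin c) (kp km : E → ℝ)
    (σ : Fin c → ℝ) : Prop :=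
  ∀ e, kp e * σ (t e) = km e * σ (h e)

section

variable {c : ℕ} {E : Type*} {t h : E → Fin c} {kp km : E → ℝ}

lemma IsDetailedBalanced.of_smul_eq {σ σ' : Fin c → ℝ} {a : ℝ}
    (hσ' : IsDetailedBalanced t h kp km σ') (hne : ∀ i, σ' i ≠ 0) (heq : a • σ = σ') :
    IsDetailedBalanced t h kp km σ := fun e => by
  have ha : a ≠ 0 := by
    rintro rfl
    exact hne (t e) (by simp [← heq])
  have := hσ' e
  simp only [← heq, Pi.smul_apply, smul_eq_mul] at this
  exact mul_left_cancel₀ ha (by linear_combination this)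

lemma isDetailedBalanced_iff_log (hkp : ∀ e, 0 < kp e) (hkm : ∀ e, 0 < km e)
    {σ : Fin c → ℝ} (hσ : ∀ i, 0 < σ i) :
    IsDetailedBalanced t h kp km σ ↔
      ∀ e, Real.log (kp e / km e) = Real.log (σ (h e)) - Real.log (σ (t e)) :=
  forall_congr' fun e => (log_div_eq_log_sub_log_iff (hkp e) (hkm e) (hσ _) (hσ _)).symm

section

variable [Fintype E]

lemma reactionLaplacian_apply (hth : ∀ e, t e ≠ h e) (i j : Fin c) :
    reactionLaplacian c t h kp km i j =
      (if i = j then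
        (∑ e ∈ Finset.univ.filter (fun e => t e = j), kp e) +
          (∑ e ∈ Finset.univ.filter (fun e => h e = j), km e)
      else 0) -
      ((∑ e ∈ Finset.univ.filter (fun e => t e = j ∧ h e = i), kp e) +
        (∑ e ∈ Finset.univ.filter (fun e => t e = i ∧ h e = j), km e)) := by
  unfold reactionLaplacian
  split_ifs with hij
  · subst hij
    have hloop : ∀ e, ¬(t e = i ∧ h e = i) := fun e ⟨hte, hhe⟩ => hth e (hte.trans hhe.symm)
    simp [hloop]
  · ring

lemma sum_reactionLaplacian_col_eq_zero (hth : ∀ e, t e ≠ h e) (j : Fin c) :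
    ∑ i, reactionLaplacian c t h kp km i j = 0 := by
  have hout : ∑ i, ∑ e ∈ Finset.univ.filter (fun e => t e = j ∧ h e = i), kp e =
      ∑ e ∈ Finset.univ.filter (fun e => t e = j), kp e := by
    simp_rw [← Finset.filter_filter, Finset.sum_fiberwise]
  have hin : ∑ i, ∑ e ∈ Finset.univ.filter (fun e => t e = i ∧ h e = j), km e =
      ∑ e ∈ Finset.univ.filter (fun e => h e = j), km e := by
    simp_rw [and_comm (a := t _ = _), ← Finset.filter_filter, Finset.sum_fiberwise]
  simp_rw [reactionLaplacian_apply hth, Finset.sum_sub_distrib, Finset.sum_add_distrib,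
    Finset.sum_ite_eq', Finset.mem_univ, if_true, hout, hin, sub_self]

lemma IsDetailedBalanced.isSymm {σ : Fin c → ℝ}
    (hσ : IsDetailedBalanced t h kp km σ) :
    (reactionLaplacian c t h kp km * diagonal σ).IsSymm := by
  refine IsSymm.ext fun i j => ?_
  rcases eq_or_ne i j with rfl | hij
  · rfl
  have hfwd : ∀ e ∈ Finset.univ.filter (fun e => t e = i ∧ h e = j),
      kp e * σ i = km e * σ j := by
    simp only [Finset.mem_filter, Finset.mem_univ, true_and]
    rintro e ⟨rfl, rfl⟩
    exact hσ e
  have hbwd : ∀ e ∈ Finset.univ.filter (fun e => t e = j ∧ h e = i),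
      km e * σ i = kp e * σ j := by
    simp only [Finset.mem_filter, Finset.mem_univ, true_and]
    rintro e ⟨rfl, rfl⟩
    exact (hσ e).symm
  simp only [mul_diagonal, reactionLaplacian, if_neg hij, if_neg hij.symm, neg_mul, add_mul,
    Finset.sum_mul, Finset.sum_congr rfl hfwd, Finset.sum_congr rfl hbwd]
  ring

lemma IsDetailedBalanced.mulVec_eq_zero (hth : ∀ e, t e ≠ h e) {σ : Fin c → ℝ}
    (hσ : IsDetailedBalanced t h kp km σ) : reactionLaplacian c t h kp km *ᵥ σ = 0 := by
  have hcol : (1 : Fin c → ℝ) ᵥ* reactionLaplacian c t h kp km = 0 := by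
    ext j
    simpa [vecMul, dotProduct] using sum_reactionLaplacian_col_eq_zero hth j
  calc reactionLaplacian c t h kp km *ᵥ σ
      = (reactionLaplacian c t h kp km * diagonal σ) *ᵥ 1 := by
        rw [← mulVec_mulVec]
        congr 1
        ext i
        simp [mulVec_diagonal]
    _ = 1 ᵥ* (reactionLaplacian c t h kp km * diagonal σ) := by
        rw [← mulVec_transpose, hσ.isSymm.eq]
    _ = 0 := by rw [← vecMul_vecMul, hcol, zero_vecMul]

lemma filter_tail_head_eq_singleton
    (hpar : Function.Injective (fun e => ({t e, h e} : Finset (Fin c)))) (e : E) :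
    Finset.univ.filter (fun e' => t e' = t e ∧ h e' = h e) = {e} := by
  ext e'
  simp only [Finset.mem_filter, Finset.mem_univ, true_and, Finset.mem_singleton]
  constructor
  · rintro ⟨hte, hhe⟩
    exact hpar (by simp only [hte, hhe])
  · rintro rfl
    exact ⟨rfl, rfl⟩

lemma filter_tail_head_swap_eq_empty (hth : ∀ e, t e ≠ h e)
    (hpar : Function.Injective (fun e => ({t e, h e} : Finset (Fin c)))) (e : E) :
    Finset.univ.filter (fun e' => t e' = h e ∧ h e' = t e) = ∅ := by
  refine Finset.filter_false_of_mem fun e' _ ⟨hte, hhe⟩ => hth e ?_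
  obtain rfl : e' = e := hpar (by simp only [hte, hhe, Finset.pair_comm])
  exact hte

lemma reactionLaplacian_apply_head_tail (hth : ∀ e, t e ≠ h e)
    (hpar : Function.Injective (fun e => ({t e, h e} : Finset (Fin c)))) (e : E) :
    reactionLaplacian c t h kp km (h e) (t e) = -kp e := by
  simp [reactionLaplacian, (hth e).symm, filter_tail_head_eq_singleton hpar,
    filter_tail_head_swap_eq_empty hth hpar]

lemma reactionLaplacian_apply_tail_head (hth : ∀ e, t e ≠ h e)
    (hpar : Function.Injective (fun e => ({t e, h e} : Finset (Fin c)))) (e : E) :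
    reactionLaplacian c t h kp km (t e) (h e) = -km e := by
  simp [reactionLaplacian, hth e, filter_tail_head_eq_singleton hpar,
    filter_tail_head_swap_eq_empty hth hpar]

lemma isDetailedBalanced_of_isSymm (hth : ∀ e, t e ≠ h e)
    (hpar : Function.Injective (fun e => ({t e, h e} : Finset (Fin c)))) {σ : Fin c → ℝ}
    (hsymm : (reactionLaplacian c t h kp km * diagonal σ).IsSymm) :
    IsDetailedBalanced t h kp km σ := fun e => by
  have := hsymm.apply (t e) (h e)
  rw [mul_diagonal, mul_diagonal, reactionLaplacian_apply_head_tail hth hpar,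
    reactionLaplacian_apply_tail_head hth hpar] at this
  linarith

lemma isSymm_mul_diagonal_iff_isDetailedBalanced (hth : ∀ e, t e ≠ h e)
    (hpar : Function.Injective (fun e => ({t e, h e} : Finset (Fin c)))) {σ : Fin c → ℝ} :
    (reactionLaplacian c t h kp km * diagonal σ).IsSymm ↔ IsDetailedBalanced t h kp km σ :=
  ⟨isDetailedBalanced_of_isSymm hth hpar, IsDetailedBalanced.isSymm⟩

end

end

theorem symmetric_tfae_log_Keq_tfae_formally_balanced_general
    (c : ℕ) (E : Type*) [Fintype E]
    (t h : E → Fin c) (hth : ∀ e, t e ≠ h e)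
    (hpar : Function.Injective (fun e => ({t e, h e} : Finset (Fin c))))
    (kp km : E → ℝ) (hkp : ∀ e, 0 < kp e) (hkm : ∀ e, 0 < km e)
    (ρ : Fin c → ℝ) (hρ : ∀ i, 0 < ρ i)
    (hker : LinearMap.ker (reactionLaplacian c t h kp km).mulVecLin =
      Submodule.span ℝ {ρ}) :
    [ (reactionLaplacian c t h kp km * Matrix.diagonal ρ).IsSymm,
      ∀ e, Real.log (kp e / km e) = Real.log (ρ (h e)) - Real.log (ρ (t e)),
      ∃ x : Fin c → ℝ, ∀ e, Real.log (kp e / km e) = x (h e) - x (t e) ].TFAE := by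
  rw [← isDetailedBalanced_iff_log hkp hkm hρ,
    isSymm_mul_diagonal_iff_isDetailedBalanced hth hpar]
  tfae_have 2 → 3
  | hbal => ⟨fun i => Real.log (ρ i), (isDetailedBalanced_iff_log hkp hkm hρ).mp hbal⟩
  tfae_have 3 → 2
  | ⟨x, hx⟩ => by
    have hexp : IsDetailedBalanced t h kp km (fun i => Real.exp (x i)) :=
      (isDetailedBalanced_iff_log hkp hkm fun i => Real.exp_pos (x i)).mpr
        (by simpa only [Real.log_exp] using hx)
    have hmem : (fun i => Real.exp (x i)) ∈ Submodule.span ℝ {ρ} := by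
      rw [← hker, LinearMap.mem_ker, mulVecLin_apply]
      exact hexp.mulVec_eq_zero hth
    obtain ⟨a, ha⟩ := Submodule.mem_span_singleton.mp hmem
    exact hexp.of_smul_eq (fun i => (Real.exp_pos (x i)).ne') ha
  tfae_finish

theorem symmetric_tfae_log_Keq_tfae_formally_balanced
    (c : ℕ) (hc : 0 < c) (E : Type*) [Fintype E]
    (t h : E → Fin c) (hth : ∀ e, t e ≠ h e)
    (hpar : Function.Injective (fun e => ({t e, h e} : Finset (Fin c))))
    (kp km : E → ℝ) (hkp : ∀ e, 0 < kp e) (hkm : ∀ e, 0 < km e)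
    (ρ : Fin c → ℝ) (hρ : ∀ i, 0 < ρ i)
    (hker : LinearMap.ker (reactionLaplacian c t h kp km).mulVecLin =
      Submodule.span ℝ {ρ}) :
    [ (reactionLaplacian c t h kp km * Matrix.diagonal ρ).IsSymm,
      ∀ e, Real.log (kp e / km e) = Real.log (ρ (h e)) - Real.log (ρ (t e)),
      ∃ x : Fin c → ℝ, ∀ e, Real.log (kp e / km e) = x (h e) - x (t e) ].TFAE :=
  symmetric_tfae_log_Keq_tfae_formally_balanced_general c E t h hth hpar kp km hkp hkm ρ hρ hker
end
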